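/- Let r ≥ 1 and let (v_1,…,v_r) be a system of linear functionals on ℂ[x] such that for every 0 ≤ j ≤ r the moment matrix M^{[j]} of V^{[j]} := (v_{j+1},…,v_r, x·v_1,…,x·v_j) admits a Gauss–Borel factorisation, and let (α_n) be as in the bidiagonal factorisation theorem. For 0 ≤ j ≤ r and m ≥ 1 let Δ^{[j]}_m denote the determinant of the m×m leading principal submatrix of M^{[j]} (Δ^{[j]}_0 := 1), and let Δ̃^{[j]}_m denote the determinant of the m×m matrix formed by rows 0,…,m−2, m and columns 0,…,m−1 of M^{[j]}. Then for all n ∈ ℕ: α_{(r+1)n} = (Δ^{[r]}_{n+1} Δ^{[0]}_n)/(Δ^{[r]}_n Δ^{[0]}_{n+1}) = Δ̃^{[0]}_{n+1}/Δ^{[0]}_{n+1} − Δ̃^{[r]}_n/Δ^{[r]}_n, and for 1 ≤ i ≤ r: α_{(r+1)n+i} = (Δ^{[i−1]}_{n+2} Δ^{[i]}_n)/(Δ^{[i−1]}_{n+1} Δ^{[i]}_{n+1}) = Δ̃^{[i]}_{n+1}/Δ^{[i]}_{n+1} − Δ̃^{[i−1]}_{n+1}/Δ^{[i−1]}_{n+1}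 (with the convention Δ̃^{[r]}_0 := 0). -/

import Mathlib

/-! The moment matrices of consecutive systems are shifts of one another: `M^{[r]}` is `M^{[0]}`
without its first row, and `M^{[i]}` is `M^{[i-1]}` without its first column. On a finite leading
block such a shift relation reads `L Q = P U` with `L` unit lower and `U` upper triangular, so
`L⁻¹ P = Q U⁻¹`. In one diagonal (row shift) or subdiagonal (column shift) entry both sides
collapse to one or two terms, which expresses `α` through the subdiagonals of the `A`'s. Finally
`Δ_m = ∏_{k<m} B_{kk}` and `Δ̃_{m+1} = A_{m+1,m} Δ_{m+1}` because `A` is unit lower triangular. -/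

open Polynomial Finset

noncomputable section

/-- A linear functional on `ℂ[x]`. -/
abbrev LF := Polynomial ℂ →ₗ[ℂ] ℂ

/-- `x·u` is the functional `p ↦ ⟨u, x p⟩`. -/
def xMul (u : LF) : LF := u.comp (LinearMap.mulLeft ℂ (Polynomial.X : Polynomial ℂ))

/-- The moment matrix of a system of `r` linear functionals (0-indexed). -/
def momentMatrix (r : ℕ) (v : ℕ → LF) (n ℓ : ℕ) : ℂ :=
  v (ℓ % r) (Polynomial.X ^ (ℓ / r + n))

/-- The Darboux-transformed system `V^{[j]} = (v_{j+1},…,v_r, x·v_1,…,x·v_j)`. -/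
def Vsys (r j : ℕ) (v : ℕ → LF) : ℕ → LF :=
  fun i => if j + i < r then v (j + i) else xMul (v (j + i - r))

/-- A Gauss–Borel factorisation `M = A·B` of the moment matrix. -/
structure GaussBorel (r : ℕ) (v : ℕ → LF) (A B : ℕ → ℕ → ℂ) : Prop where
  A_diag : ∀ n, A n n = 1
  A_upper : ∀ n ℓ, n < ℓ → A n ℓ = 0
  B_lower : ∀ n ℓ, ℓ < n → B n ℓ = 0
  B_diag : ∀ n, B n n ≠ 0
  factor : ∀ n ℓ, momentMatrix r v n ℓ = ∑ k ∈ Finset.range (n + 1), A n k * B k ℓ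

/-- The coefficients `α_{(r+1)n} = B^{[r]}_{n,n}/B^{[0]}_{n,n}` and
`α_{(r+1)n+i} = B^{[i-1]}_{n+1,n+1}/B^{[i]}_{n,n}` for `1 ≤ i ≤ r`. -/
def alphaGB (r : ℕ) (B : ℕ → ℕ → ℕ → ℂ) (m : ℕ) : ℂ :=
  if m % (r + 1) = 0 then
    B r (m / (r + 1)) (m / (r + 1)) / B 0 (m / (r + 1)) (m / (r + 1))
  else
    B (m % (r + 1) - 1) (m / (r + 1) + 1) (m / (r + 1) + 1)
      / B (m % (r + 1)) (m / (r + 1)) (m / (r + 1))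

/-- `Δ_m`: determinant of the `m × m` leading principal submatrix of the
moment matrix of `v` (`Δ_0 = 1`). -/
def Delta (r : ℕ) (v : ℕ → LF) (m : ℕ) : ℂ :=
  Matrix.det (Matrix.of fun i j : Fin m => momentMatrix r v i j)

/-- `Δ̃_m`: determinant of the `m × m` matrix formed by rows `0,…,m−2, m` and
columns `0,…,m−1` of the moment matrix of `v` (with `Δ̃_0 := 0`). -/
def DeltaT (r : ℕ) (v : ℕ → LF) (m : ℕ) : ℂ :=
  if m = 0 then 0 else
    Matrix.det (Matrix.of fun i j : Fin m =>
      momentMatrix r v (if (i : ℕ) = m - 1 then m else (i : ℕ)) j)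


namespace Matrix

section

variable {ι K : Type*} [Fintype ι] [DecidableEq ι] [Field K]

theorem BlockTriangular.inv {α : Type*} [LinearOrder α] {M : Matrix ι ι K} {b : ι → α}
    (hM : M.BlockTriangular b) : M⁻¹.BlockTriangular b := by
  by_cases h : IsUnit M.det
  · have := M.invertibleOfIsUnitDet h
    exact blockTriangular_inv_of_blockTriangular hM
  · rw [nonsing_inv_apply_not_isUnit M h]
    exact blockTriangular_zero

theorem inv_mul_eq_mul_inv_of_mul_eq {L Q P U : Matrix ι ι K} (hL : IsUnit L.det)
    (hU : IsUnit U.det) (h : L * Q = P * U) : L⁻¹ * P = Q * U⁻¹ := by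
  rw [← mul_nonsing_inv_cancel_right U P hU, ← h, Matrix.mul_assoc,
    nonsing_inv_mul_cancel_left L (Q * U⁻¹) hL]

end

section

variable {ι K : Type*} [Fintype ι] [LinearOrder ι] [Field K]

theorem IsUpperTriangular.mul_apply_eq_mul_diag {M N : Matrix ι ι K} (hN : N.IsUpperTriangular)
    {i j : ι} (hM : ∀ k < j, M i k = 0) : (M * N) i j = M i j * N j j := by
  rw [mul_apply, Finset.sum_eq_single j]
  · intro k _ hk
    rcases hk.lt_or_gt with hk | hk
    · rw [hM k hk, zero_mul]
    · rw [hN hk, mul_zero]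
  · simp

theorem IsLowerTriangular.mul_apply_eq_diag_mul {M N : Matrix ι ι K} (hM : M.IsLowerTriangular)
    {i j : ι} (hN : ∀ k < i, N k j = 0) : (M * N) i j = M i i * N i j := by
  rw [mul_apply, Finset.sum_eq_single i]
  · intro k _ hk
    rcases hk.lt_or_gt with hk | hk
    · rw [hN k hk, mul_zero]
    · rw [hM (OrderDual.toDual_lt_toDual.2 hk), zero_mul]
  · simp

variable [DecidableEq ι]

theorem IsUpperTriangular.isUnit_det {U : Matrix ι ι K} (hU : U.IsUpperTriangular)
    (hd : ∀ i, U i i ≠ 0) : IsUnit U.det := by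
  rw [det_of_isUpperTriangular hU]
  exact (prod_ne_zero_iff.2 fun i _ => hd i).isUnit

theorem IsLowerTriangular.isUnit_det {L : Matrix ι ι K} (hL : L.IsLowerTriangular)
    (hd : ∀ i, L i i ≠ 0) : IsUnit L.det := by
  rw [det_of_isLowerTriangular L hL]
  exact (prod_ne_zero_iff.2 fun i _ => hd i).isUnit

theorem IsUpperTriangular.inv_apply_self {U : Matrix ι ι K} (hU : U.IsUpperTriangular)
    (hd : ∀ i, U i i ≠ 0) (i : ι) : U⁻¹ i i = (U i i)⁻¹ := by
  have h := congr_fun₂ (nonsing_inv_mul U (hU.isUnit_det hd)) i i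
  rw [hU.mul_apply_eq_mul_diag (i := i) (j := i) fun k hk => hU.inv hk, one_apply_eq] at h
  exact eq_inv_of_mul_eq_one_left h

theorem IsLowerTriangular.inv_apply_self {L : Matrix ι ι K} (hL : L.IsLowerTriangular)
    (hd : ∀ i, L i i = 1) (i : ι) : L⁻¹ i i = 1 := by
  have h := congr_fun₂ (nonsing_inv_mul L (hL.isUnit_det fun i => by simp [hd])) i i
  rwa [IsLowerTriangular.mul_apply_eq_diag_mul hL.inv
    fun k hk => hL (OrderDual.toDual_lt_toDual.2 hk),
    one_apply_eq, hd, mul_one] at h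

theorem IsLowerTriangular.inv_mul_apply_eq_add_of_covBy {L P : Matrix ι ι K}
    (hL : L.IsLowerTriangular) {i' i j : ι} (hi : i' ⋖ i) (hP : ∀ k < i', P k j = 0) :
    (L⁻¹ * P) i j = L⁻¹ i i' * P i' j + L⁻¹ i i * P i j := by
  rw [mul_apply, Fintype.sum_eq_add i' i hi.ne]
  rintro k ⟨hki', hki⟩
  rcases hki'.lt_or_gt with hk | hk
  · rw [hP k hk, mul_zero]
  · have : i < k := lt_of_le_of_ne (not_lt.1 fun h => hi.2 hk h) (Ne.symm hki)
    rw [hL.inv (OrderDual.toDual_lt_toDual.2 this), zero_mul]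

theorem IsLowerTriangular.inv_apply_of_covBy {L : Matrix ι ι K} (hL : L.IsLowerTriangular)
    (hd : ∀ i, L i i = 1) {i' i : ι} (hi : i' ⋖ i) : L⁻¹ i i' = -L i i' := by
  have h := hL.inv_mul_apply_eq_add_of_covBy hi fun k hk => hL (OrderDual.toDual_lt_toDual.2 hk)
  rw [nonsing_inv_mul L (hL.isUnit_det fun i => by simp [hd]), one_apply_ne hi.ne.symm,
    hd, hL.inv_apply_self hd] at h
  linear_combination -h

theorem IsLowerTriangular.inv_mul_apply_eq_sub_of_covBy {L P : Matrix ι ι K}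
    (hL : L.IsLowerTriangular) (hd : ∀ i, L i i = 1) {i' i j : ι} (hi : i' ⋖ i)
    (hP : ∀ k < i', P k j = 0) :
    (L⁻¹ * P) i j = P i j - L i i' * P i' j := by
  rw [hL.inv_mul_apply_eq_add_of_covBy hi hP, hL.inv_apply_of_covBy hd hi, hL.inv_apply_self hd]
  ring

end

end Matrix


namespace GaussBorel

variable {r : ℕ} {v w : ℕ → LF} {A B A' B' : ℕ → ℕ → ℂ}

theorem momentMatrix_eq_sum_range (h : GaussBorel r v A B) {n ℓ m : ℕ} (hm : n < m ∨ ℓ < m) :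
    momentMatrix r v n ℓ = ∑ k ∈ range m, A n k * B k ℓ := by
  have hA : ∀ k ∈ range (max (n + 1) m), k ∉ range (n + 1) → A n k * B k ℓ = 0 := by
    intro k _ hk
    rw [h.A_upper n k (by simp at hk; omega), zero_mul]
  have hB : ∀ k ∈ range (max (n + 1) m), k ∉ range m → A n k * B k ℓ = 0 := by
    intro k _ hk
    simp only [mem_range, not_lt] at hk
    rcases hm with hn | hℓ
    · rw [h.A_upper n k (by omega), zero_mul]
    · rw [h.B_lower k ℓ (by omega), mul_zero]
  rw [h.factor, sum_subset (range_mono (le_max_left _ _)) hA,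
    sum_subset (range_mono (le_max_right _ _)) hB]

theorem of_momentMatrix_eq_mul (h : GaussBorel r v A B) {m : ℕ} (ρ σ : Fin m → ℕ)
    (hρσ : ∀ i j, ρ i < m ∨ σ j < m) :
    Matrix.of (fun i j => momentMatrix r v (ρ i) (σ j)) =
      Matrix.of (fun i (k : Fin m) => A (ρ i) k) * Matrix.of (fun (k : Fin m) j => B k (σ j)) := by
  ext i j
  rw [Matrix.of_apply, h.momentMatrix_eq_sum_range (hρσ i j), Matrix.mul_apply,
    ← Fin.sum_univ_eq_sum_range (fun k => A (ρ i) k * B k (σ j))]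
  rfl

theorem isLowerTriangular_A (h : GaussBorel r v A B) (m : ℕ) :
    (Matrix.of fun i j : Fin m => A i j).IsLowerTriangular :=
  fun _ _ hij => h.A_upper _ _ hij

theorem isUpperTriangular_B (h : GaussBorel r v A B) (m : ℕ) :
    (Matrix.of fun i j : Fin m => B i j).IsUpperTriangular :=
  fun _ _ hij => h.B_lower _ _ hij

theorem delta_eq_det_B (h : GaussBorel r v A B) (m : ℕ) :
    Delta r v m = (Matrix.of fun i j : Fin m => B i j).det := by
  rw [Delta, h.of_momentMatrix_eq_mul Fin.val Fin.val fun _ j => Or.inr j.2, Matrix.det_mul,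
    Matrix.det_of_isLowerTriangular _ (h.isLowerTriangular_A m)]
  simp [h.A_diag]

theorem delta_eq_prod (h : GaussBorel r v A B) (m : ℕ) :
    Delta r v m = ∏ k ∈ range m, B k k := by
  rw [h.delta_eq_det_B, Matrix.det_of_isUpperTriangular (h.isUpperTriangular_B m)]
  exact Fin.prod_univ_eq_prod_range (fun k => B k k) m

theorem delta_ne_zero (h : GaussBorel r v A B) (m : ℕ) : Delta r v m ≠ 0 := by
  rw [h.delta_eq_prod]
  exact prod_ne_zero_iff.2 fun k _ => h.B_diag k

theorem delta_succ (h : GaussBorel r v A B) (m : ℕ) :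
    Delta r v (m + 1) = Delta r v m * B m m := by
  rw [h.delta_eq_prod, h.delta_eq_prod, prod_range_succ]

theorem deltaT_div_delta (h : GaussBorel r v A B) (m : ℕ) :
    DeltaT r v (m + 1) / Delta r v (m + 1) = A (m + 1) m := by
  let ρ : Fin (m + 1) → ℕ := fun i => if (i : ℕ) = m + 1 - 1 then m + 1 else i
  have hL : (Matrix.of fun i (k : Fin (m + 1)) => A (ρ i) k).IsLowerTriangular := by
    intro i k hik
    have hik : (i : ℕ) < k := hik
    simp only [Matrix.of_apply, ρ, if_neg (show (i : ℕ) ≠ m + 1 - 1 by omega)]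
    exact h.A_upper _ _ hik
  have hdet : (Matrix.of fun i (k : Fin (m + 1)) => A (ρ i) k).det = A (m + 1) m := by
    rw [Matrix.det_of_isLowerTriangular _ hL, Fin.prod_univ_castSucc,
      prod_eq_one fun i _ => ?_, one_mul]
    · simp [ρ]
    · simp [ρ, i.is_lt.ne, h.A_diag]
  rw [DeltaT, if_neg m.succ_ne_zero, h.of_momentMatrix_eq_mul ρ Fin.val fun _ j => Or.inr j.2,
    Matrix.det_mul, hdet, ← h.delta_eq_det_B, mul_div_assoc, div_self (h.delta_ne_zero _),
    mul_one]

theorem diag_div_of_row_shift (h : GaussBorel r v A B) (h' : GaussBorel r w A' B')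
    (hshift : ∀ n ℓ, momentMatrix r w n ℓ = momentMatrix r v (n + 1) ℓ) (n : ℕ) :
    B' n n / B n n = DeltaT r v (n + 1) / Delta r v (n + 1) - DeltaT r w n / Delta r w n := by
  let L := Matrix.of fun i j : Fin (n + 1) => A' i j
  let P := Matrix.of fun i j : Fin (n + 1) => A (i + 1) j
  have hLU : L * (Matrix.of fun i j : Fin (n + 1) => B' i j) =
      P * Matrix.of fun i j : Fin (n + 1) => B i j := by
    rw [← h'.of_momentMatrix_eq_mul Fin.val Fin.val fun _ j => Or.inr j.2,
      ← h.of_momentMatrix_eq_mul (fun i => i + 1) Fin.val fun _ j => Or.inr j.2]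
    ext i j
    exact hshift i j
  have hL := h'.isLowerTriangular_A (n + 1)
  have hU := h.isUpperTriangular_B (n + 1)
  have key := congr_fun₂ (Matrix.inv_mul_eq_mul_inv_of_mul_eq
    (hL.isUnit_det fun i => by simp [h'.A_diag]) (hU.isUnit_det fun i => h.B_diag i) hLU)
    (Fin.last n) (Fin.last n)
  rw [Matrix.IsUpperTriangular.mul_apply_eq_mul_diag hU.inv fun k hk => h'.B_lower _ _ hk,
    hU.inv_apply_self fun i => h.B_diag i] at key
  simp only [Matrix.of_apply, Fin.val_last] at key
  rw [h.deltaT_div_delta, div_eq_mul_inv, ← key]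
  rcases n with _ | m
  · rw [Matrix.IsLowerTriangular.mul_apply_eq_diag_mul hL.inv (i := Fin.last 0)
      fun k hk => by simp at hk, hL.inv_apply_self fun i => h'.A_diag i]
    simp [P, DeltaT]
  · rw [hL.inv_mul_apply_eq_sub_of_covBy (fun i => h'.A_diag i) (i' := (Fin.last m).castSucc)
      (i := Fin.last (m + 1)) (by simp)
      fun k (hk : (k : ℕ) < m) => h.A_upper _ _ (by simp; omega), h'.deltaT_div_delta]
    simp [P, h.A_diag]

theorem diag_div_of_col_shift (h : GaussBorel r v A B) (h' : GaussBorel r w A' B')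
    (hshift : ∀ n ℓ, momentMatrix r w n ℓ = momentMatrix r v n (ℓ + 1)) (n : ℕ) :
    B (n + 1) (n + 1) / B' n n =
      DeltaT r w (n + 1) / Delta r w (n + 1) - DeltaT r v (n + 1) / Delta r v (n + 1) := by
  let Q := Matrix.of fun i j : Fin (n + 2) => B i (j + 1)
  let P := Matrix.of fun i j : Fin (n + 2) => A' i j
  have hLU : (Matrix.of fun i j : Fin (n + 2) => A i j) * Q =
      P * Matrix.of fun i j : Fin (n + 2) => B' i j := by
    rw [← h.of_momentMatrix_eq_mul Fin.val (fun j => j + 1) fun i _ => Or.inl i.2,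
      ← h'.of_momentMatrix_eq_mul Fin.val Fin.val fun _ j => Or.inr j.2]
    ext i j
    exact (hshift i j).symm
  have hL := h.isLowerTriangular_A (n + 2)
  have hU := h'.isUpperTriangular_B (n + 2)
  have key := congr_fun₂ (Matrix.inv_mul_eq_mul_inv_of_mul_eq
    (hL.isUnit_det fun i => by simp [h.A_diag]) (hU.isUnit_det fun i => h'.B_diag i) hLU)
    (Fin.last (n + 1)) (Fin.last n).castSucc
  rw [hL.inv_mul_apply_eq_sub_of_covBy (fun i => h.A_diag i) (by simp)
      fun k hk => h'.A_upper _ _ hk,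
    Matrix.IsUpperTriangular.mul_apply_eq_mul_diag hU.inv
      fun k (hk : (k : ℕ) < n) => h.B_lower _ _ (by simp; omega),
    hU.inv_apply_self fun i => h'.B_diag i] at key
  simp only [P, Q, Matrix.of_apply, Fin.val_last, Fin.val_castSucc, h'.A_diag, mul_one] at key
  rw [h'.deltaT_div_delta, h.deltaT_div_delta, div_eq_mul_inv, ← key]

end GaussBorel

theorem xMul_X_pow (u : LF) (k : ℕ) : xMul u (X ^ k) = u (X ^ (k + 1)) := by
  simp [xMul, pow_succ']

theorem momentMatrix_Vsys {r j : ℕ} (hr : 0 < r) (hj : j ≤ r) (v : ℕ → LF) (n ℓ : ℕ) :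
    momentMatrix r (Vsys r j v) n ℓ = v ((j + ℓ) % r) (X ^ ((j + ℓ) / r + n)) := by
  have hℓ : j + ℓ = j + ℓ % r + r * (ℓ / r) := by rw [add_assoc, Nat.mod_add_div]
  have hs : ℓ % r < r := Nat.mod_lt ℓ hr
  rw [hℓ, Nat.add_mul_mod_self_left, Nat.add_mul_div_left _ _ hr]
  simp only [momentMatrix, Vsys]
  split_ifs with hlt
  · rw [Nat.mod_eq_of_lt hlt, Nat.div_eq_of_lt hlt, zero_add]
  · have hge : r ≤ j + ℓ % r := not_lt.1 hlt
    have hsub : j + ℓ % r - r < r := by omega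
    rw [xMul_X_pow, Nat.mod_eq_sub_mod hge, Nat.mod_eq_of_lt hsub, Nat.div_eq_sub_div hr hge,
      Nat.div_eq_of_lt hsub]
    ring_nf

theorem momentMatrix_Vsys_self {r : ℕ} (hr : 0 < r) (v : ℕ → LF) (n ℓ : ℕ) :
    momentMatrix r (Vsys r r v) n ℓ = momentMatrix r (Vsys r 0 v) (n + 1) ℓ := by
  rw [momentMatrix_Vsys hr le_rfl, momentMatrix_Vsys hr r.zero_le, Nat.add_mod_left, zero_add,
    Nat.add_div_left _ hr]
  ring_nf

theorem momentMatrix_Vsys_succ {r j : ℕ} (hr : 0 < r) (hj : j < r) (v : ℕ → LF) (n ℓ : ℕ) :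
    momentMatrix r (Vsys r (j + 1) v) n ℓ = momentMatrix r (Vsys r j v) n (ℓ + 1) := by
  rw [momentMatrix_Vsys (j := j + 1) hr hj, momentMatrix_Vsys hr hj.le,
    show j + 1 + ℓ = j + (ℓ + 1) by ring]

theorem alphaGB_mul (r : ℕ) (B : ℕ → ℕ → ℕ → ℂ) (n : ℕ) :
    alphaGB r B ((r + 1) * n) = B r n n / B 0 n n := by
  rw [alphaGB, if_pos (Nat.mul_mod_right _ _), Nat.mul_div_cancel_left _ r.succ_pos]

theorem alphaGB_mul_add {r i : ℕ} (B : ℕ → ℕ → ℕ → ℂ) (n : ℕ) (hi : i < r) :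
    alphaGB r B ((r + 1) * n + (i + 1)) = B i (n + 1) (n + 1) / B (i + 1) n n := by
  have hmod : ((r + 1) * n + (i + 1)) % (r + 1) = i + 1 := by
    rw [Nat.mul_add_mod, Nat.mod_eq_of_lt (by omega)]
  have hdiv : ((r + 1) * n + (i + 1)) / (r + 1) = n := by
    rw [Nat.mul_add_div r.succ_pos, Nat.div_eq_of_lt (by omega), add_zero]
  rw [alphaGB, hmod, hdiv, if_neg i.succ_ne_zero, Nat.add_sub_cancel]

theorem stmt6 (r : ℕ) (hr : 1 ≤ r) (v : ℕ → LF) (A B : ℕ → ℕ → ℕ → ℂ)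
    (hGB : ∀ j, j ≤ r → GaussBorel r (Vsys r j v) (A j) (B j)) :
    ∀ n : ℕ,
      (alphaGB r B ((r + 1) * n)
          = (Delta r (Vsys r r v) (n + 1) * Delta r (Vsys r 0 v) n)
            / (Delta r (Vsys r r v) n * Delta r (Vsys r 0 v) (n + 1)) ∧
       alphaGB r B ((r + 1) * n)
          = DeltaT r (Vsys r 0 v) (n + 1) / Delta r (Vsys r 0 v) (n + 1)
            - DeltaT r (Vsys r r v) n / Delta r (Vsys r r v) n) ∧
      (∀ i, 1 ≤ i → i ≤ r →
        alphaGB r B ((r + 1) * n + i)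
          = (Delta r (Vsys r (i - 1) v) (n + 2) * Delta r (Vsys r i v) n)
            / (Delta r (Vsys r (i - 1) v) (n + 1) * Delta r (Vsys r i v) (n + 1)) ∧
        alphaGB r B ((r + 1) * n + i)
          = DeltaT r (Vsys r i v) (n + 1) / Delta r (Vsys r i v) (n + 1)
            - DeltaT r (Vsys r (i - 1) v) (n + 1) / Delta r (Vsys r (i - 1) v) (n + 1)) := by
  intro n
  have hGB0 := hGB 0 r.zero_le
  have hGBr := hGB r le_rfl
  refine ⟨⟨?_, ?_⟩, fun i hi hir => ?_⟩
  · rw [alphaGB_mul, hGBr.delta_succ, hGB0.delta_succ]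
    field_simp [hGBr.delta_ne_zero n, hGB0.delta_ne_zero n]
  · rw [alphaGB_mul, hGB0.diag_div_of_row_shift hGBr (momentMatrix_Vsys_self hr v)]
  · obtain ⟨i, rfl⟩ := Nat.exists_eq_add_of_le' hi
    have hGBi := hGB i (by omega)
    have hGBi' := hGB (i + 1) hir
    rw [Nat.add_sub_cancel, alphaGB_mul_add B n hir]
    refine ⟨?_, hGBi.diag_div_of_col_shift hGBi' (momentMatrix_Vsys_succ hr hir v) n⟩
    rw [hGBi.delta_succ (n + 1), hGBi'.delta_succ n]
    field_simp [hGBi.delta_ne_zero (n + 1), hGBi'.delta_ne_zero n]
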